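/- arXiv:2511.21988 — 5 statements merged into one kernel-verified Lean document; each statement's English description precedes it below -/
import Mathlib

section
/- Let Z1 and Z2 be nonempty compact metric spaces equipped with their Borel σ-algebras, let c : Z1 × Z2 → ℝ be continuous, and let μ1 be a Borel probability measure on Z1. Then the supremum, over all Borel probability measures π on Z1 × Z2 whose pushforward under the first projection equals μ1, of ∫ c dπ equals ∫_{Z1} (max_{z2 ∈ Z2} c(z1, z2)) dμ1(z1). -/
open MeasureTheory

/-- Reduction formula: the supremum, over all Borel probability measures `π` on `Z1 × Z2`
whose first marginal is `μ1`, of `∫ c dπ` equals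
`∫ z1, (max over z2 of c (z1, z2)) dμ1`. -/
theorem reduction_formula
    {Z1 Z2 : Type*}
    [MetricSpace Z1] [CompactSpace Z1] [Nonempty Z1]
    [MeasurableSpace Z1] [BorelSpace Z1]
    [MetricSpace Z2] [CompactSpace Z2] [Nonempty Z2]
    [MeasurableSpace Z2] [BorelSpace Z2]
    (c : Z1 × Z2 → ℝ) (hc : Continuous c)
    (μ1 : Measure Z1) [IsProbabilityMeasure μ1] :
    sSup {x : ℝ | ∃ π : Measure (Z1 × Z2), IsProbabilityMeasure π ∧
        π.map Prod.fst = μ1 ∧ x = ∫ z, c z ∂π}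
      = ∫ z1, (⨆ z2 : Z2, c (z1, z2)) ∂μ1 := by
  set S := {x : ℝ | ∃ π : Measure (Z1 × Z2), IsProbabilityMeasure π ∧
      π.map Prod.fst = μ1 ∧ x = ∫ z, c z ∂π} with hS
  -- a uniform bound on c
  obtain ⟨z0, -, hz0⟩ := isCompact_univ.exists_isMaxOn Set.univ_nonempty
    (continuous_abs.comp hc).continuousOn
  set M : ℝ := |c z0| with hMdef
  have hM : ∀ z, |c z| ≤ M := fun z => hz0 (Set.mem_univ z)
  set g : Z1 → ℝ := fun z1 => ⨆ z2, c (z1, z2) with hg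
  have hbdd : ∀ z1, BddAbove (Set.range fun z2 => c (z1, z2)) := fun z1 =>
    ⟨M, by rintro _ ⟨z2, rfl⟩; exact (abs_le.mp (hM _)).2⟩
  have hle : ∀ z1 z2, c (z1, z2) ≤ g z1 := fun z1 z2 => le_ciSup (hbdd z1) z2
  have hgle : ∀ z1, |g z1| ≤ M := by
    intro z1
    rw [abs_le]
    constructor
    · exact le_trans (abs_le.mp (hM (z1, Classical.arbitrary Z2))).1 (hle z1 _)
    · exact ciSup_le fun z2 => (abs_le.mp (hM _)).2
  -- dense sequence in Z2
  let y : ℕ → Z2 := TopologicalSpace.denseSeq Z2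
  have hy : DenseRange y := TopologicalSpace.denseRange_denseSeq Z2
  have hcy : ∀ n, Continuous fun z1 => c (z1, y n) := fun n =>
    hc.comp (continuous_id.prodMk continuous_const)
  -- key approximation fact
  have key : ∀ ε : ℝ, 0 < ε → ∀ z1, ∃ n, g z1 - ε < c (z1, y n) := by
    intro ε hε z1
    obtain ⟨z2s, -, hz2s⟩ := isCompact_univ.exists_isMaxOn Set.univ_nonempty
      (hc.comp (continuous_const.prodMk continuous_id :
        Continuous fun z2 : Z2 => (z1, z2))).continuousOn
    have hgz : g z1 ≤ c (z1, z2s) := ciSup_le fun z2 => hz2s (Set.mem_univ z2)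
    have hU : IsOpen {z2 : Z2 | g z1 - ε < c (z1, z2)} :=
      isOpen_lt continuous_const (hc.comp (continuous_const.prodMk continuous_id))
    obtain ⟨n, hn⟩ := hy.exists_mem_open hU ⟨z2s, by
      simp only [Set.mem_setOf_eq]; linarith⟩
    exact ⟨n, hn⟩
  -- g is measurable
  have hgeq : ∀ z1, g z1 = ⨆ n, c (z1, y n) := by
    intro z1
    have hbdd' : BddAbove (Set.range fun n => c (z1, y n)) :=
      ⟨M, by rintro _ ⟨n, rfl⟩; exact (abs_le.mp (hM _)).2⟩
    refine le_antisymm (le_of_forall_sub_le fun ε hε => ?_)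
      (ciSup_le fun n => hle z1 (y n))
    obtain ⟨n, hn⟩ := key ε hε z1
    exact hn.le.trans (le_ciSup hbdd' n)
  have hgmeas : Measurable g := by
    have : g = fun z1 => ⨆ n, c (z1, y n) := funext hgeq
    rw [this]
    exact Measurable.iSup fun n => (hcy n).measurable
  have hgint : Integrable g μ1 :=
    ⟨hgmeas.aestronglyMeasurable,
      HasFiniteIntegral.of_bounded (C := M) (ae_of_all _ fun z1 => by
        simpa [Real.norm_eq_abs] using hgle z1)⟩
  -- upper bound
  have hub : ∀ x ∈ S, x ≤ ∫ z1, g z1 ∂μ1 := by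
    rintro x ⟨π, hπ, hmarg, rfl⟩
    have hcint : Integrable c π :=
      ⟨hc.aestronglyMeasurable,
        HasFiniteIntegral.of_bounded (C := M) (ae_of_all _ fun z => by
          simpa [Real.norm_eq_abs] using hM z)⟩
    have hgfint : Integrable (fun z : Z1 × Z2 => g z.1) π :=
      ⟨(hgmeas.comp measurable_fst).aestronglyMeasurable,
        HasFiniteIntegral.of_bounded (C := M) (ae_of_all _ fun z => by
          simpa [Real.norm_eq_abs] using hgle z.1)⟩
    calc ∫ z, c z ∂π ≤ ∫ z, g z.1 ∂π :=
          integral_mono hcint hgfint fun z => hle z.1 z.2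
      _ = ∫ z1, g z1 ∂μ1 := by
          rw [← hmarg, integral_map measurable_fst.aemeasurable
            hgmeas.aestronglyMeasurable]
  -- nonempty
  have hne : S.Nonempty := by
    refine ⟨∫ z, c z ∂(μ1.map fun z1 => (z1, y 0)), μ1.map fun z1 => (z1, y 0), ?_, ?_, rfl⟩
    · have hm : Measurable fun z1 : Z1 => (z1, y 0) :=
        measurable_id.prodMk measurable_const
      exact Measure.isProbabilityMeasure_map hm.aemeasurable
    · have hm : Measurable fun z1 : Z1 => (z1, y 0) :=
        measurable_id.prodMk measurable_const
      rw [Measure.map_map measurable_fst hm,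
        show Prod.fst ∘ (fun z1 : Z1 => (z1, y 0)) = id from rfl, Measure.map_id]
  have hbddS : BddAbove S := ⟨_, hub⟩
  refine le_antisymm (csSup_le hne hub) (le_of_forall_sub_le fun ε hε => ?_)
  -- construct a near-optimal coupling
  have hex : ∀ z1, ∃ n, g z1 - ε < c (z1, y n) := key ε hε
  set N : Z1 → ℕ := fun z1 => Nat.find (hex z1) with hN
  have hPmeas : ∀ n, MeasurableSet {z1 | g z1 - ε < c (z1, y n)} := fun n =>
    measurableSet_lt (hgmeas.sub measurable_const) (hcy n).measurable
  have hNmeas : Measurable N := by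
    apply measurable_to_countable'
    intro n
    have : N ⁻¹' {n} = {z1 | g z1 - ε < c (z1, y n)} ∩
        ⋂ m, ⋂ _ : m < n, {z1 | g z1 - ε < c (z1, y m)}ᶜ := by
      ext z1
      simp only [Set.mem_preimage, Set.mem_singleton_iff, hN, Nat.find_eq_iff,
        Set.mem_inter_iff, Set.mem_setOf_eq, Set.mem_iInter, Set.mem_compl_iff]
    rw [this]
    exact (hPmeas n).inter (MeasurableSet.iInter fun m =>
      MeasurableSet.iInter fun _ => (hPmeas m).compl)
  set T : Z1 → Z2 := fun z1 => y (N z1) with hT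
  have hTmeas : Measurable T := measurable_from_top.comp hNmeas
  set φ : Z1 → Z1 × Z2 := fun z1 => (z1, T z1) with hφdef
  have hφ : Measurable φ := measurable_id.prodMk hTmeas
  have hmem : (∫ z, c z ∂(μ1.map φ)) ∈ S := by
    refine ⟨μ1.map φ, Measure.isProbabilityMeasure_map hφ.aemeasurable, ?_, rfl⟩
    rw [Measure.map_map measurable_fst hφ,
      show Prod.fst ∘ φ = id from rfl, Measure.map_id]
  have hrw : ∫ z, c z ∂(μ1.map φ) = ∫ z1, c (φ z1) ∂μ1 :=
    integral_map hφ.aemeasurable hc.aestronglyMeasurable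
  have hcφint : Integrable (fun z1 => c (φ z1)) μ1 :=
    ⟨(hc.measurable.comp hφ).aestronglyMeasurable,
      HasFiniteIntegral.of_bounded (C := M) (ae_of_all _ fun z1 => by
        simpa [Real.norm_eq_abs] using hM (φ z1))⟩
  have hlow : ∫ z1, g z1 ∂μ1 - ε ≤ ∫ z, c z ∂(μ1.map φ) := by
    rw [hrw]
    have : ∫ z1, g z1 ∂μ1 - ε = ∫ z1, (g z1 - ε) ∂μ1 := by
      rw [integral_sub hgint (integrable_const ε), integral_const]
      simp
    rw [this]
    exact integral_mono (hgint.sub (integrable_const ε)) hcφint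
      fun z1 => (Nat.find_spec (hex z1)).le
  exact hlow.trans (le_csSup hbddS hmem)
end

section
/- Let Z1 and Z2 be nonempty compact metric spaces, let φ : Z1 × Z2 → ℝ^k be continuous, let p ∈ (0,1), let π¹ be a Borel probability measure on Z1 × Z2, and let π1⁰ be a Borel probability measure on Z1. For u ∈ ℝ^k, the supremum over all Borel probability measures π⁰ on Z1 × Z2 with first marginal π1⁰ of ⟨u, p·∫ φ dπ¹ + (1−p)·∫ φ dπ⁰⟩ equals p·⟨u, ∫ φ dπ¹⟩ + (1−p)·∫_{Z1} (max_{z2 ∈ Z2} ⟨u, φ(z1, z2)⟩) dπ1⁰(z1). -/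
open MeasureTheory
open scoped RealInnerProductSpace

/-- Support function formula: the supremum, over all Borel probability measures `π0` on
`Z1 × Z2` with first marginal `π10`, of `⟪u, p • ∫ φ dπ1 + (1 - p) • ∫ φ dπ0⟫` equals
`p * ⟪u, ∫ φ dπ1⟫ + (1 - p) * ∫ z1, (max over z2 of ⟪u, φ (z1, z2)⟫) dπ10`. -/
theorem support_function_formula
    {k : ℕ} {Z1 Z2 : Type*}
    [MetricSpace Z1] [CompactSpace Z1] [Nonempty Z1]
    [MeasurableSpace Z1] [BorelSpace Z1]
    [MetricSpace Z2] [CompactSpace Z2] [Nonempty Z2]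
    [MeasurableSpace Z2] [BorelSpace Z2]
    (φ : Z1 × Z2 → EuclideanSpace ℝ (Fin k)) (hφ : Continuous φ)
    (p : ℝ) (hp : p ∈ Set.Ioo (0 : ℝ) 1)
    (π1 : Measure (Z1 × Z2)) [IsProbabilityMeasure π1]
    (π10 : Measure Z1) [IsProbabilityMeasure π10]
    (u : EuclideanSpace ℝ (Fin k)) :
    sSup {x : ℝ | ∃ π0 : Measure (Z1 × Z2), IsProbabilityMeasure π0 ∧
        π0.map Prod.fst = π10 ∧
        x = ⟪u, p • (∫ z, φ z ∂π1) + (1 - p) • (∫ z, φ z ∂π0)⟫}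
      = p * ⟪u, ∫ z, φ z ∂π1⟫
        + (1 - p) * ∫ z1, (⨆ z2 : Z2, ⟪u, φ (z1, z2)⟫) ∂π10 := by
  classical
  obtain ⟨hp0, hp1⟩ := hp
  have hp1' : (0 : ℝ) < 1 - p := by linarith
  set h : Z1 × Z2 → ℝ := fun z => ⟪u, φ z⟫ with hh_def
  have hhc : Continuous h := continuous_const.inner hφ
  -- global bound on h
  obtain ⟨z₀, -, hz₀⟩ := isCompact_univ.exists_isMaxOn Set.univ_nonempty
    (continuous_abs.comp hhc).continuousOn
  set C : ℝ := |h z₀| with hC_def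
  have hbound : ∀ z, |h z| ≤ C := fun z => hz₀ (Set.mem_univ z)
  -- integrability of φ w.r.t. any probability measure on Z1 × Z2
  have hφint : ∀ (μ : Measure (Z1 × Z2)) [IsProbabilityMeasure μ], Integrable φ μ := by
    intro μ _
    apply hφ.integrable_of_hasCompactSupport
    exact IsCompact.of_isClosed_subset isCompact_univ (isClosed_tsupport _) (Set.subset_univ _)
  set g : Z1 → ℝ := fun z1 => ⨆ z2 : Z2, h (z1, z2) with hg_def
  have hbddA : ∀ z1 : Z1, BddAbove (Set.range fun z2 => h (z1, z2)) := fun z1 =>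
    (isCompact_range (hhc.comp (Continuous.prodMk_right z1))).bddAbove
  have hle : ∀ z : Z1 × Z2, h z ≤ g z.1 := fun z => le_ciSup (hbddA z.1) z.2
  -- g attains its value
  have hmax : ∀ z1 : Z1, ∃ z2 : Z2, g z1 = h (z1, z2) := by
    intro z1
    obtain ⟨z2, -, hz2⟩ := isCompact_univ.exists_isMaxOn Set.univ_nonempty
      (hhc.comp (Continuous.prodMk_right z1)).continuousOn
    exact ⟨z2, le_antisymm (ciSup_le fun y => hz2 (Set.mem_univ y)) (le_ciSup (hbddA z1) z2)⟩
  have hgbound : ∀ z1, |g z1| ≤ C := by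
    intro z1
    obtain ⟨z2, hz2⟩ := hmax z1
    rw [hz2]; exact hbound _
  -- dense sequence in Z2
  set d : ℕ → Z2 := TopologicalSpace.denseSeq Z2 with hd_def
  have hd : DenseRange d := TopologicalSpace.denseRange_denseSeq Z2
  -- g equals the countable sup over the dense sequence, hence measurable
  have hgseq : ∀ z1, g z1 = ⨆ n : ℕ, h (z1, d n) := by
    intro z1
    have hbddn : BddAbove (Set.range fun n => h (z1, d n)) := by
      obtain ⟨b, hb⟩ := hbddA z1
      exact ⟨b, by rintro x ⟨n, rfl⟩; exact hb ⟨d n, rfl⟩⟩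
    refine le_antisymm ?_ (ciSup_le fun n => hle (z1, d n))
    refine ciSup_le fun z2 => ?_
    have hz2 : z2 ∈ closure (Set.range d) := hd z2
    obtain ⟨f, hf_mem, hf_tendsto⟩ := mem_closure_iff_seq_limit.1 hz2
    have htend : Filter.Tendsto (fun n => h (z1, f n)) Filter.atTop (nhds (h (z1, z2))) :=
      ((hhc.comp (Continuous.prodMk_right z1)).tendsto z2).comp hf_tendsto
    refine le_of_tendsto htend (Filter.Eventually.of_forall fun n => ?_)
    obtain ⟨m, hm⟩ := hf_mem n
    rw [← hm]
    exact le_ciSup hbddn m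
  have hgmeas : Measurable g := by
    have hm : Measurable fun z1 => ⨆ n : ℕ, h (z1, d n) :=
      Measurable.iSup fun n =>
        (hhc.comp ((continuous_id.prodMk continuous_const) :
          Continuous fun z1 : Z1 => (z1, d n))).measurable
    rw [show g = (fun z1 => ⨆ n : ℕ, h (z1, d n)) from funext hgseq]
    exact hm
  have hgint : Integrable g π10 := by
    refine ⟨hgmeas.aestronglyMeasurable, ?_⟩
    apply HasFiniteIntegral.of_bounded (C := C)
    exact Filter.Eventually.of_forall fun z1 => by simpa [Real.norm_eq_abs] using hgbound z1
  set A : ℝ := p * ⟪u, ∫ z, φ z ∂π1⟫ with hA_def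
  set L : ℝ := A + (1 - p) * ∫ z1, g z1 ∂π10 with hL_def
  -- rewrite a member's value
  have hval : ∀ (π0 : Measure (Z1 × Z2)) [IsProbabilityMeasure π0],
      ⟪u, p • (∫ z, φ z ∂π1) + (1 - p) • (∫ z, φ z ∂π0)⟫
        = A + (1 - p) * ∫ z, h z ∂π0 := by
    intro π0 _
    rw [inner_add_right, real_inner_smul_right, real_inner_smul_right,
      ← integral_inner (hφint π0) u]
  -- upper bound for members
  have hub : ∀ x ∈ {x : ℝ | ∃ π0 : Measure (Z1 × Z2), IsProbabilityMeasure π0 ∧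
      π0.map Prod.fst = π10 ∧
      x = ⟪u, p • (∫ z, φ z ∂π1) + (1 - p) • (∫ z, φ z ∂π0)⟫}, x ≤ L := by
    rintro x ⟨π0, hπ0, hmarg, rfl⟩
    rw [hval π0, hL_def]
    have hhint : Integrable h π0 := by
      refine ⟨hhc.measurable.aestronglyMeasurable, ?_⟩
      apply HasFiniteIntegral.of_bounded (C := C)
      exact Filter.Eventually.of_forall fun z => by simpa [Real.norm_eq_abs] using hbound z
    have hgfint : Integrable (fun z : Z1 × Z2 => g z.1) π0 := by
      refine ⟨(hgmeas.comp measurable_fst).aestronglyMeasurable, ?_⟩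
      apply HasFiniteIntegral.of_bounded (C := C)
      exact Filter.Eventually.of_forall fun z => by simpa [Real.norm_eq_abs] using hgbound z.1
    have h1 : ∫ z, h z ∂π0 ≤ ∫ z, g z.1 ∂π0 := integral_mono hhint hgfint hle
    have h2 : ∫ z, g z.1 ∂π0 = ∫ z1, g z1 ∂π10 := by
      rw [← hmarg, integral_map measurable_fst.aemeasurable hgmeas.aestronglyMeasurable]
    nlinarith [h1.trans_eq h2, hp1']
  -- for each ε > 0, construct a near-optimal member
  have hlb : ∀ ε : ℝ, 0 < ε → ∃ x ∈ {x : ℝ | ∃ π0 : Measure (Z1 × Z2), IsProbabilityMeasure π0 ∧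
      π0.map Prod.fst = π10 ∧
      x = ⟪u, p • (∫ z, φ z ∂π1) + (1 - p) • (∫ z, φ z ∂π0)⟫},
      L - (1 - p) * ε ≤ x := by
    intro ε hε
    have hexists : ∀ z1 : Z1, ∃ n : ℕ, g z1 - ε < h (z1, d n) := by
      intro z1
      obtain ⟨z2, hz2⟩ := hmax z1
      have hU : IsOpen {y : Z2 | g z1 - ε < h (z1, y)} :=
        isOpen_lt continuous_const (hhc.comp (Continuous.prodMk_right z1))
      have hz2U : ({y : Z2 | g z1 - ε < h (z1, y)}).Nonempty :=
        ⟨z2, by simp only [Set.mem_setOf_eq, ← hz2]; linarith⟩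
      obtain ⟨n, hn⟩ := hd.exists_mem_open hU hz2U
      exact ⟨n, hn⟩
    set s : Z1 → Z2 := fun z1 => d (Nat.find (hexists z1)) with hs_def
    have hsmeas : Measurable s := by
      apply measurable_from_top.comp
      apply measurable_find hexists
      intro n
      exact measurableSet_lt (hgmeas.sub measurable_const)
        ((hhc.comp ((continuous_id.prodMk continuous_const) :
          Continuous fun z1 : Z1 => (z1, d n))).measurable)
    set t : Z1 → Z1 × Z2 := fun z1 => (z1, s z1) with ht_def
    have htmeas : Measurable t := measurable_id.prodMk hsmeas
    set π0 : Measure (Z1 × Z2) := π10.map t with hπ0_def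
    haveI hπ0prob : IsProbabilityMeasure π0 := Measure.isProbabilityMeasure_map htmeas.aemeasurable
    have hmarg : π0.map Prod.fst = π10 := by
      rw [hπ0_def, Measure.map_map measurable_fst htmeas]
      have : Prod.fst ∘ t = id := rfl
      rw [this, Measure.map_id]
    refine ⟨_, ⟨π0, hπ0prob, hmarg, rfl⟩, ?_⟩
    rw [hval π0]
    have hint_ht : ∫ z, h z ∂π0 = ∫ z1, h (t z1) ∂π10 := by
      rw [hπ0_def, integral_map htmeas.aemeasurable hhc.measurable.aestronglyMeasurable]
    have hhtint : Integrable (fun z1 => h (t z1)) π10 := by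
      refine ⟨(hhc.measurable.comp htmeas).aestronglyMeasurable, ?_⟩
      apply HasFiniteIntegral.of_bounded (C := C)
      exact Filter.Eventually.of_forall fun z1 => by simpa [Real.norm_eq_abs] using hbound (t z1)
    have hmono : ∫ z1, (g z1 - ε) ∂π10 ≤ ∫ z1, h (t z1) ∂π10 :=
      integral_mono (hgint.sub (integrable_const ε)) hhtint
        (fun z1 => (Nat.find_spec (hexists z1)).le)
    rw [integral_sub hgint (integrable_const ε), integral_const, probReal_univ,
      smul_eq_mul, one_mul] at hmono
    rw [hL_def, hint_ht]
    nlinarith [hmono, hp1']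
  -- conclude
  have hne : {x : ℝ | ∃ π0 : Measure (Z1 × Z2), IsProbabilityMeasure π0 ∧
      π0.map Prod.fst = π10 ∧
      x = ⟪u, p • (∫ z, φ z ∂π1) + (1 - p) • (∫ z, φ z ∂π0)⟫}.Nonempty := by
    obtain ⟨x, hx, -⟩ := hlb 1 one_pos
    exact ⟨x, hx⟩
  have hmain : sSup {x : ℝ | ∃ π0 : Measure (Z1 × Z2), IsProbabilityMeasure π0 ∧
      π0.map Prod.fst = π10 ∧
      x = ⟪u, p • (∫ z, φ z ∂π1) + (1 - p) • (∫ z, φ z ∂π0)⟫} = L := by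
    refine le_antisymm (csSup_le hne hub) ?_
    refine le_of_forall_pos_le_add fun ε hε => ?_
    obtain ⟨x, hx, hxle⟩ := hlb (ε / (1 - p)) (by positivity)
    have hxs := le_csSup ⟨L, hub⟩ hx
    have h2 : (1 - p) * (ε / (1 - p)) = ε := by field_simp
    linarith
  rw [hmain, hL_def, hA_def]
end

section
/- Let K be a nonempty compact metric space, let ψ : K → ℝ be continuous, and let U = { u ∈ K : ψ(u) = min_{v ∈ K} ψ(v) } be its (nonempty, compact) set of minimizers. Let (t_n) be a sequence of positive reals with t_n → 0, let h : K → ℝ be continuous, and let (h_n) be continuous functions on K converging uniformly to h. Then (min_{u ∈ K} (ψ(u) + t_n·h_n(u)) − min_{u ∈ K} ψ(u)) / t_n → min_{u ∈ U} h(u). -/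
open Filter

/-- Hadamard directional differentiability of the minimum-value functional on `C(K)`
(Shapiro's theorem): if `t_n → 0⁺` and `h_n → h` uniformly, then
`(min_K (ψ + t_n h_n) − min_K ψ) / t_n → min_U h`, where `U` is the argmin set of `ψ`. -/
theorem min_value_hadamard_directional_derivative
    {K : Type*} [MetricSpace K] [CompactSpace K] [Nonempty K]
    (ψ : K → ℝ) (hψ : Continuous ψ)
    (U : Set K) (hU : U = {u : K | ψ u = sInf (Set.range ψ)})
    (t : ℕ → ℝ) (htpos : ∀ n, 0 < t n) (ht0 : Tendsto t atTop (nhds 0))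
    (h : K → ℝ) (hh : Continuous h)
    (hn : ℕ → K → ℝ) (hhn : ∀ n, Continuous (hn n))
    (hunif : TendstoUniformly hn h atTop) :
    Tendsto (fun n =>
        (sInf (Set.range (fun u => ψ u + t n * hn n u)) - sInf (Set.range ψ)) / t n)
      atTop (nhds (sInf (h '' U))) := by
  -- minimizer `u0` of `ψ`
  obtain ⟨u0, -, hu0⟩ := isCompact_univ.exists_isMinOn Set.univ_nonempty hψ.continuousOn
  have hu0' : ∀ v, ψ u0 ≤ ψ v := fun v => isMinOn_iff.mp hu0 v (Set.mem_univ v)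
  have hm : sInf (Set.range ψ) = ψ u0 :=
    IsLeast.csInf_eq ⟨⟨u0, rfl⟩, by rintro y ⟨v, rfl⟩; exact hu0' v⟩
  set m := ψ u0 with hmdef
  -- the argmin set
  have hUmem : ∀ u, u ∈ U ↔ ψ u = m := by
    intro u; rw [hU, Set.mem_setOf_eq, hm]
  have hu0U : u0 ∈ U := (hUmem u0).2 rfl
  have hUcl : IsClosed U := by
    rw [hU]; exact isClosed_eq hψ continuous_const
  -- minimizer `us` of `h` on `U`
  obtain ⟨us, husU, hus'⟩ := hUcl.isCompact.exists_isMinOn ⟨u0, hu0U⟩ hh.continuousOn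
  have hus : ∀ u ∈ U, h us ≤ h u := fun u hu => isMinOn_iff.mp hus' u hu
  have hL : sInf (h '' U) = h us :=
    IsLeast.csInf_eq ⟨⟨us, husU, rfl⟩, by rintro y ⟨u, hu, rfl⟩; exact hus u hu⟩
  set L := h us with hLdef
  have hψus : ψ us = m := (hUmem us).1 husU
  -- minimizers `w n` of `ψ + t n • hn n`
  have hwex : ∀ n : ℕ, ∃ w : K, ∀ v, ψ w + t n * hn n w ≤ ψ v + t n * hn n v := by
    intro n
    obtain ⟨w, -, hwmin⟩ := isCompact_univ.exists_isMinOn Set.univ_nonempty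
      ((hψ.add (continuous_const.mul (hhn n))).continuousOn)
    exact ⟨w, fun v => isMinOn_iff.mp hwmin v (Set.mem_univ v)⟩
  choose w hw using hwex
  have hg : ∀ n, sInf (Set.range (fun u => ψ u + t n * hn n u))
      = ψ (w n) + t n * hn n (w n) :=
    fun n => IsLeast.csInf_eq ⟨⟨w n, rfl⟩, by rintro y ⟨v, rfl⟩; exact hw n v⟩
  -- bound on `h`
  obtain ⟨B, hB⟩ := isCompact_univ.exists_bound_of_continuousOn hh.continuousOn
  have hB' : ∀ x : K, |h x| ≤ B := fun x => hB x (Set.mem_univ x)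
  rw [hm, hL, Metric.tendsto_nhds]
  intro ε hε
  set ε' := ε / 3 with hε'def
  have hε' : 0 < ε' := by positivity
  -- the "bad" set where `h` is small; `ψ` is bounded away from `m` there
  set C : Set K := {u : K | h u ≤ L - ε'} with hCdef
  have hCcl : IsClosed C := isClosed_le hh continuous_const
  obtain ⟨η, hη, hCb⟩ : ∃ η > 0, ∀ u ∈ C, m + η ≤ ψ u := by
    rcases Set.eq_empty_or_nonempty C with hCe | hCne
    · exact ⟨1, one_pos, by simp [hCe]⟩
    · obtain ⟨c, hcC, hc'⟩ := hCcl.isCompact.exists_isMinOn hCne hψ.continuousOn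
      have hc : ∀ u ∈ C, ψ c ≤ ψ u := fun u hu => isMinOn_iff.mp hc' u hu
      have hcC' : h c ≤ L - ε' := hcC
      have hcm : m < ψ c := by
        rcases lt_or_eq_of_le (hu0' c) with h' | h'
        · exact h'
        · exact absurd (hus c ((hUmem c).2 h'.symm)) (by linarith)
      exact ⟨ψ c - m, by linarith, fun u hu => by linarith [hc u hu]⟩
  -- uniform convergence and smallness of `t`
  have E1 : ∀ᶠ n in atTop, ∀ x, dist (h x) (hn n x) < ε' :=
    Metric.tendstoUniformly_iff.mp hunif ε' hε'
  have E2 : ∀ᶠ n in atTop, t n * (L + B + ε') < η := by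
    have : Tendsto (fun n => t n * (L + B + ε')) atTop (nhds 0) := by
      simpa using ht0.mul_const (L + B + ε')
    exact this.eventually_lt_const hη
  filter_upwards [E1, E2] with n h1 h2
  have htn : (0 : ℝ) < t n := htpos n
  rw [hg n]
  set q : ℝ := (ψ (w n) + t n * hn n (w n) - m) / t n with hqdef
  have hq' : q = (ψ (w n) - m) / t n + hn n (w n) := by
    rw [hqdef]; field_simp; ring
  -- upper bound
  have h1us : |h us - hn n us| < ε' := by
    rw [← Real.dist_eq]; exact h1 us
  have hup : q < L + ε' := by
    have hle : q ≤ hn n us := by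
      rw [hqdef, div_le_iff₀ htn]
      have := hw n us
      rw [hψus] at this
      nlinarith [mul_comm (hn n us) (t n)]
    have : hn n us < L + ε' := by
      rw [← hLdef] at h1us
      cases' abs_lt.mp h1us with _ h2'
      linarith
    linarith
  -- lower bound
  have h1w : |h (w n) - hn n (w n)| < ε' := by
    rw [← Real.dist_eq]; exact h1 (w n)
  have hψwm : m ≤ ψ (w n) := hu0' (w n)
  have hlow : L - 2 * ε' < q := by
    by_cases hwC : w n ∈ C
    · -- on the bad set : `(ψ (w n) - m)/t n` is huge
      have hnw : -B - ε' ≤ hn n (w n) := by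
        have hb := hB' (w n)
        cases' abs_lt.mp h1w with h2' _
        cases' abs_le.mp hb with hb1 _
        linarith
      have hdiv : η / t n ≤ (ψ (w n) - m) / t n := by
        gcongr
        linarith [hCb _ hwC]
      have hηt : L + B + ε' < η / t n := by
        rw [lt_div_iff₀ htn]
        nlinarith [mul_comm (L + B + ε') (t n)]
      rw [hq']
      nlinarith
    · -- off the bad set : `hn n (w n)` is nearly at least `L`
      have hwC' : L - ε' < h (w n) := not_le.mp hwC
      have hnw : L - 2 * ε' < hn n (w n) := by
        cases' abs_lt.mp h1w with _ h2'
        linarith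
      have hdivnn : 0 ≤ (ψ (w n) - m) / t n := div_nonneg (by linarith) htn.le
      rw [hq']
      linarith
  rw [Real.dist_eq, abs_lt]
  exact ⟨by linarith, by linarith⟩
end

section
/- Let B be a nonempty compact metric space, let ψ : B → ℝ be continuous with argmin set U = { u ∈ B : ψ(u) = min_{v ∈ B} ψ(v) }, and suppose there is κ > 0 such that ψ(u) ≥ min_{v ∈ B} ψ(v) + κ·dist(u, U) for all u ∈ B. Let (ψ̂_n) be continuous functions on B, let δ_n = sup_{u ∈ B} |ψ̂_n(u) − ψ(u)|, and let (ε_n) be positive reals with ε_n → 0 and δ_n / ε_n → 0. Define Û_n = { v ∈ B : ψ̂_n(v) ≤ min_{w ∈ B} ψ̂_n(w) + ε_n }. Then the Hausdorff distance between Û_n and U converges to 0. -/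
open Filter

/-- Deterministic version of Lemma B.1 of the paper: under the sharp-minima condition,
if the uniform errors `δ_n = sup_u |ψ̂_n(u) − ψ(u)|` satisfy `δ_n / ε_n → 0` with
`ε_n → 0⁺`, then the `ε_n`-enlarged approximate argmin sets
`Û_n = { v : ψ̂_n(v) ≤ min ψ̂_n + ε_n }` converge in Hausdorff distance to the true
argmin set `U`. -/
theorem enlarged_argmin_hausdorff_convergence
    {B : Type*} [MetricSpace B] [CompactSpace B] [Nonempty B]
    (ψ : B → ℝ) (hψ : Continuous ψ)
    (U : Set B) (hU : U = {u : B | ψ u = sInf (Set.range ψ)})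
    (κ : ℝ) (hκ : 0 < κ)
    (hsharp : ∀ u : B, sInf (Set.range ψ) + κ * Metric.infDist u U ≤ ψ u)
    (ψhat : ℕ → B → ℝ) (hψhat : ∀ n, Continuous (ψhat n))
    (δ : ℕ → ℝ) (hδ : ∀ n, δ n = ⨆ u : B, |ψhat n u - ψ u|)
    (ε : ℕ → ℝ) (hεpos : ∀ n, 0 < ε n)
    (hε0 : Tendsto ε atTop (nhds 0))
    (hδε : Tendsto (fun n => δ n / ε n) atTop (nhds 0))
    (Uhat : ℕ → Set B)
    (hUhat : ∀ n, Uhat n = {v : B | ψhat n v ≤ sInf (Set.range (ψhat n)) + ε n}) :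
    Tendsto (fun n => Metric.hausdorffDist (Uhat n) U) atTop (nhds 0) := by
  set m : ℝ := sInf (Set.range ψ) with hm
  have hbd : BddBelow (Set.range ψ) := (isCompact_range hψ).bddBelow
  obtain ⟨u0, hu0⟩ : m ∈ Set.range ψ :=
    (isCompact_range hψ).sInf_mem (Set.range_nonempty ψ)
  have hu0U : u0 ∈ U := by rw [hU]; exact hu0
  have hmle : ∀ u, m ≤ ψ u := fun u => csInf_le hbd ⟨u, rfl⟩
  have hδbound : ∀ n u, |ψhat n u - ψ u| ≤ δ n := by
    intro n u
    rw [hδ n]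
    exact le_ciSup ((isCompact_range (((hψhat n).sub hψ).abs)).bddAbove) u
  have hδnonneg : ∀ n, 0 ≤ δ n := fun n => le_trans (abs_nonneg _) (hδbound n u0)
  have hbdn : ∀ n, BddBelow (Set.range (ψhat n)) := fun n =>
    (isCompact_range (hψhat n)).bddBelow
  have h1 : ∀ n, sInf (Set.range (ψhat n)) ≤ m + δ n := by
    intro n
    have h := hδbound n u0
    rw [abs_le] at h
    calc sInf (Set.range (ψhat n)) ≤ ψhat n u0 := csInf_le (hbdn n) ⟨u0, rfl⟩
    _ ≤ ψ u0 + δ n := by linarith [h.2]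
    _ = m + δ n := by rw [hu0]
  have h2 : ∀ n, m ≤ sInf (Set.range (ψhat n)) + δ n := by
    intro n
    obtain ⟨un, hun⟩ : sInf (Set.range (ψhat n)) ∈ Set.range (ψhat n) :=
      (isCompact_range (hψhat n)).sInf_mem (Set.range_nonempty _)
    have h := hδbound n un
    rw [abs_le] at h
    calc m ≤ ψ un := hmle un
    _ ≤ ψhat n un + δ n := by linarith [h.1]
    _ = _ := by rw [hun]
  have hδ0 : Tendsto δ atTop (nhds 0) := by
    have h := hδε.mul hε0
    rw [zero_mul] at h
    refine h.congr (fun n => ?_)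
    rw [div_mul_cancel₀ _ (hεpos n).ne']
  have hg0 : Tendsto (fun n => (ε n + 2 * δ n) / κ) atTop (nhds 0) := by
    have h : Tendsto (fun n => (ε n + 2 * δ n) / κ) atTop (nhds ((0 + 2 * 0) / κ)) :=
      (hε0.add (hδ0.const_mul 2)).div_const κ
    simpa using h
  apply squeeze_zero' (Eventually.of_forall fun n => Metric.hausdorffDist_nonneg) ?_ hg0
  have hev : ∀ᶠ n in atTop, δ n / ε n ≤ 1 / 2 :=
    hδε.eventually (eventually_le_nhds (by norm_num))
  filter_upwards [hev] with n hn
  have hδε2 : 2 * δ n ≤ ε n := by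
    have := (div_le_iff₀ (hεpos n)).mp hn
    linarith
  have hsub : U ⊆ Uhat n := by
    intro u hu
    rw [hU] at hu
    rw [hUhat]
    have h := hδbound n u
    rw [abs_le] at h
    simp only [Set.mem_setOf_eq] at hu ⊢
    calc ψhat n u ≤ ψ u + δ n := by linarith [h.1]
    _ = m + δ n := by rw [hu]
    _ ≤ sInf (Set.range (ψhat n)) + ε n := by linarith [h2 n]
  apply Metric.hausdorffDist_le_of_infDist
  · exact div_nonneg (by linarith [hδnonneg n, (hεpos n).le]) hκ.le
  · intro v hv
    rw [hUhat] at hv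
    simp only [Set.mem_setOf_eq] at hv
    have h := hδbound n v
    rw [abs_le] at h
    have hψv : ψ v ≤ m + ε n + 2 * δ n := by linarith [h1 n, h.2]
    have hκd := hsharp v
    rw [le_div_iff₀ hκ]
    nlinarith [Metric.infDist_nonneg (x := v) (s := U)]
  · intro y hy
    have h0 : Metric.infDist y (Uhat n) = 0 :=
      Metric.infDist_zero_of_mem (hsub hy)
    rw [h0]
    exact div_nonneg (by linarith [hδnonneg n, (hεpos n).le]) hκ.le
end

section
/- Let Θ be a metric space, let Q, Q̂ : Θ → ℝ, and let Θ_I = { θ ∈ Θ : Q(θ) = 0 } be nonempty. Suppose there is a function m : [0,∞) → [0,∞) with m(0) = 0, m weakly increasing, and m(t) > 0 for t > 0, such that Q(θ) ≤ −m(dist(θ, Θ_I)) for every θ ∈ Θ, where dist(θ, Θ_I) = inf_{θ′ ∈ Θ_I} d(θ, θ′). Let η > 0 and δ > 0 satisfy sup_{θ ∈ Θ} |Q̂(θ) − Q(θ)| ≤ η and 2η < m(δ), and define Θ̂ = { θ ∈ Θ : Q̂(θ) ≥ −η }. Then Θ_I ⊆ Θ̂ and Θ̂ ⊆ { θ ∈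 Θ : dist(θ, Θ_I) ≤ δ }. -/
/-- Deterministic core of Theorem 3 of the paper (Hausdorff consistency): under the
separation condition `Q(θ) ≤ −m(dist(θ, Θ_I))`, if `sup_θ |Q̂(θ) − Q(θ)| ≤ η` and
`2η < m(δ)`, then the estimated set `Θ̂ = { θ : Q̂(θ) ≥ −η }` contains `Θ_I` and is
contained in its `δ`-enlargement. -/
theorem estimated_set_sandwich
    {Θ : Type*} [MetricSpace Θ]
    (Q Qhat : Θ → ℝ)
    (ΘI : Set Θ) (hΘI : ΘI = {θ : Θ | Q θ = 0}) (hne : ΘI.Nonempty)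
    (m : ℝ → ℝ) (hm0 : m 0 = 0)
    (hmono : ∀ s t : ℝ, 0 ≤ s → s ≤ t → m s ≤ m t)
    (hmpos : ∀ t : ℝ, 0 < t → 0 < m t)
    (hsep : ∀ θ : Θ, Q θ ≤ -m (Metric.infDist θ ΘI))
    (η δ : ℝ) (hη : 0 < η) (hδ : 0 < δ)
    (hclose : ∀ θ : Θ, |Qhat θ - Q θ| ≤ η) (hηδ : 2 * η < m δ)
    (Θhat : Set Θ) (hΘhat : Θhat = {θ : Θ | -η ≤ Qhat θ}) :
    ΘI ⊆ Θhat ∧ Θhat ⊆ {θ : Θ | Metric.infDist θ ΘI ≤ δ} := by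
  constructor
  · intro θ hθ
    rw [hΘI] at hθ
    have h := abs_le.mp (hclose θ)
    rw [hΘhat]
    simp only [Set.mem_setOf_eq] at hθ ⊢
    linarith [h.1]
  · intro θ hθ
    rw [hΘhat] at hθ
    simp only [Set.mem_setOf_eq] at hθ ⊢
    have h := abs_le.mp (hclose θ)
    have hQ : -2 * η ≤ Q θ := by linarith [h.2]
    have hQ2 : m (Metric.infDist θ ΘI) ≤ 2 * η := by linarith [hsep θ]
    by_contra hd
    push_neg at hd
    have := hmono δ (Metric.infDist θ ΘI) hδ.le hd.le
    linarith
end
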